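/- Let K be a compact Hausdorff space, A a closed subspace of C(K,ℝ), and B ⊆ K a boundary for A (meaning sup of |h| over B equals ||h|| for each h in A, and moreover for any h ∈ A and constant c ∈ ℝ, if h < c on B then h < c on K). Let 0 < ε < 1, let U be an open subset of K, and let g, h ∈ A satisfy 0 ≤ g ≤ 1 and 0 ≤ h ≤ 1 on K, h > 1 − ε on U, and g < ε on B \ U. Then g < h + ε everywhere on K. -/

import Mathlib

open Set ZeroAtInfty Ordinal

noncomputable section

/-- Iterated Cantor–Bendixson derivative, indexed by ordinals. -/
def cbDeriv {S : Type*} [TopologicalSpace S] (F : Set S) : Ordinal → Set S :=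
  fun o => Ordinal.limitRecOn o F (fun _ ih => derivedSet ih)
    (fun o _ ih => ⋂ (β : {β // β < o}), ih β β.2)

/-- The function `f ⊗ e : x ↦ f x • e`. -/
def tensor {K : Type*} [TopologicalSpace K] {E : Type*} [NormedAddCommGroup E]
    [NormedSpace ℝ E] (f : C(K, ℝ)) (e : E) : C(K, E) :=
  ⟨fun x => f x • e, (map_continuous f).smul continuous_const⟩

/-- `E` contains an isomorphic copy of `c₀`. -/
def ContainsCopyOfC0 (E : Type*) [NormedAddCommGroup E] [NormedSpace ℝ E] : Prop :=
  ∃ T : C₀(ℕ, ℝ) →L[ℝ] E, ∃ c > 0, ∀ x, c * ‖x‖ ≤ ‖T x‖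

/-- The canonical scalar function space associated to `H ⊆ C(K,E)`:
the closed linear span of `{e* ∘ h : e* ∈ E*, h ∈ H}`. -/
def scalarSpace {K : Type*} [TopologicalSpace K] [CompactSpace K]
    {E : Type*} [NormedAddCommGroup E] [NormedSpace ℝ E]
    (H : Submodule ℝ C(K, E)) : Submodule ℝ C(K, ℝ) :=
  (Submodule.span ℝ {f : C(K, ℝ) | ∃ φ : E →L[ℝ] ℝ, ∃ h ∈ H,
      f = ⟨fun x => φ (h x), φ.continuous.comp (map_continuous h)⟩}).topologicalClosure

/-- The evaluation functional `i(x) : A → ℝ`, `h ↦ h x`. -/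
def evalFun {K : Type*} [TopologicalSpace K] [CompactSpace K]
    (A : Submodule ℝ C(K, ℝ)) (x : K) : ↥A →L[ℝ] ℝ :=
  LinearMap.mkContinuous
    { toFun := fun h => (h : C(K, ℝ)) x
      map_add' := fun a b => rfl
      map_smul' := fun c a => rfl } 1
    (fun h => by simpa using (h : C(K, ℝ)).norm_coe_le_norm x)

/-- The Choquet boundary of `H ⊆ C(K,E)`: points whose evaluation functional is an
extreme point of the dual unit ball of the associated scalar space. -/
def ChoquetBoundary {K : Type*} [TopologicalSpace K] [CompactSpace K]
    {E : Type*} [NormedAddCommGroup E] [NormedSpace ℝ E]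
    (H : Submodule ℝ C(K, E)) : Set K :=
  {x | evalFun (scalarSpace H) x ∈
      Set.extremePoints ℝ (@Metric.closedBall (↥(scalarSpace H) →L[ℝ] ℝ)
        (ContinuousLinearMap.toSeminormedAddCommGroup (𝕜 := ℝ) (𝕜₂ := ℝ) (σ₁₂ := RingHom.id ℝ)
          (E := ↥(scalarSpace H)) (F := ℝ)).toPseudoMetricSpace 0 1)}

/-- `A^E`: elements `f` of the scalar space with `f ⊗ e ∈ H` for all `e`. -/
def AE {K : Type*} [TopologicalSpace K] [CompactSpace K]
    {E : Type*} [NormedAddCommGroup E] [NormedSpace ℝ E]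
    (H : Submodule ℝ C(K, E)) : Set C(K, ℝ) :=
  {f | f ∈ scalarSpace H ∧ ∀ e : E, tensor f e ∈ H}

/-- Weak peak point of `H ⊆ C(K,E)`. -/
def IsWeakPeakPoint {K : Type*} [TopologicalSpace K] [CompactSpace K]
    {E : Type*} [NormedAddCommGroup E] [NormedSpace ℝ E]
    (H : Submodule ℝ C(K, E)) (x : K) : Prop :=
  ∀ U ∈ nhds x, ∀ ε ∈ Set.Ioo (0 : ℝ) 1, ∃ f ∈ AE H,
    (∀ y, f y ∈ Set.Icc (0 : ℝ) 1) ∧ 1 - ε < f x ∧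
      ∀ y ∈ ChoquetBoundary H \ U, f y < ε

/-- `Ω_H = { y : ∃ g ∈ H, g y ≠ 0 }`. -/
def OmegaSet {K : Type*} [TopologicalSpace K] [CompactSpace K]
    {E : Type*} [NormedAddCommGroup E] [NormedSpace ℝ E]
    (H : Submodule ℝ C(K, E)) : Set K :=
  {y | ∃ g ∈ H, (g : C(K, E)) y ≠ 0}

theorem stmt_1_general {K : Type*} [TopologicalSpace K]
    (A : Submodule ℝ C(K, ℝ))
    (B : Set K)
    (hBmax : ∀ h ∈ A, ∀ c : ℝ, (∀ y ∈ B, h y < c) → ∀ x : K, h x < c)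
    (ε : ℝ) (U : Set K)
    (g h : C(K, ℝ)) (hg : g ∈ A) (hh : h ∈ A)
    (hg01 : ∀ x, g x ∈ Set.Icc (0 : ℝ) 1) (hh01 : ∀ x, h x ∈ Set.Icc (0 : ℝ) 1)
    (hhU : ∀ x ∈ U, 1 - ε < h x) (hgB : ∀ y ∈ B \ U, g y < ε) :
    ∀ x : K, g x < h x + ε := by
  have hB : ∀ y ∈ B, (g - h) y < ε := by
    intro y hy
    rw [ContinuousMap.sub_apply]
    by_cases hyU : y ∈ U
    · linarith [(hg01 y).2, hhU y hyU]
    · linarith [hgB y ⟨hy, hyU⟩, (hh01 y).1]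
  intro x
  have hK := hBmax (g - h) (sub_mem hg hh) ε hB x
  rw [ContinuousMap.sub_apply] at hK
  linarith

/-- Lemma 2.3 (nerovnost). -/
theorem stmt_1 {K : Type*} [TopologicalSpace K] [CompactSpace K] [T2Space K]
    (A : Submodule ℝ C(K, ℝ)) (hA : IsClosed (A : Set C(K, ℝ)))
    (B : Set K)
    (hBnorm : ∀ h ∈ A, ‖h‖ = ⨆ x : B, |h (x : K)|)
    (hBmax : ∀ h ∈ A, ∀ c : ℝ, (∀ y ∈ B, h y < c) → ∀ x : K, h x < c)
    (ε : ℝ) (hε : ε ∈ Set.Ioo (0 : ℝ) 1) (U : Set K) (hU : IsOpen U)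
    (g h : C(K, ℝ)) (hg : g ∈ A) (hh : h ∈ A)
    (hg01 : ∀ x, g x ∈ Set.Icc (0 : ℝ) 1) (hh01 : ∀ x, h x ∈ Set.Icc (0 : ℝ) 1)
    (hhU : ∀ x ∈ U, 1 - ε < h x) (hgB : ∀ y ∈ B \ U, g y < ε) :
    ∀ x : K, g x < h x + ε :=
  stmt_1_general A B hBmax ε U g h hg hh hg01 hh01 hhU hgB
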